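/- Let x ≥ 0 and y be integers, and let G_0 be a graph of minimum order in the nonempty family M(x,y). Then |V(G_0)| ≤ 2χ(G_0) − 1 and |V(G_0)| ≥ 4f(G_0) − 2x − 1. -/

import Mathlib

/-- The chromatic number of `G` as a natural number. -/
noncomputable def chi {V : Type*} (G : SimpleGraph V) : ℕ := G.chromaticNumber.toNat

/-- `f(G) = χ(G) − cl(G)`. -/
noncomputable def fDiff {V : Type*} (G : SimpleGraph V) : ℕ := chi G - G.cliqueNum

/-- Membership in the family `M(x,y) = {G : |V(G)| < χ(G) + 2f(G) − x and f(G) ≤ y}`. -/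
def inM (x y : ℤ) {V : Type*} [Fintype V] (G : SimpleGraph V) : Prop :=
  (Fintype.card V : ℤ) < chi G + 2 * fDiff G - x ∧ (fDiff G : ℤ) ≤ y

/-- The set of orders of members of `M(x,y)`. -/
def McardSet (x y : ℤ) : Set ℕ := {n | ∃ G : SimpleGraph (Fin n), inM x y G}

/-!
Write `n`, `χ`, `ω` for the order, chromatic number and clique number of `G₀`, so that
`G₀ ∈ M(x,y)` reads `n < 3χ - 2ω - x`. Deleting a colour class `C` of an optimal colouring
lowers `χ` by exactly one and `ω` by at most one, so `f` does not grow, and `G₀ - C` stays in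
`M(x,y)` as soon as `|C| > 3 - (3χ - 2ω - x - n)`; minimality forbids this.

If `n ≥ 2χ`, a vertex `v` outside a maximum clique must be colour-critical (otherwise
`G₀ - v` is in `M(x,y)`), and a `(χ-1)`-colouring of `G₀ - v`, extended by a new colour at
`v`, has a class of size at least `3`. If `n < 4f - 2x - 1`, the first bound forces
`3χ - 2ω - x - n ≥ 2`, and an optimal colouring has a class of size at least `2` unless `G₀`
is complete, which `x ≥ 0` rules out.
-/

open Finset SimpleGraph

section ChromaticNumber

variable {V W : Type*} {G : SimpleGraph V} {H : SimpleGraph W}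

lemma colorable_chi [Finite V] (G : SimpleGraph V) : G.Colorable (chi G) :=
  G.colorable_chromaticNumber_of_fintype

lemma chi_le_of_colorable {n : ℕ} (h : G.Colorable n) : chi G ≤ n :=
  ENat.toNat_le_of_le_natCast h.chromaticNumber_le

lemma chi_le_card [Fintype V] (G : SimpleGraph V) : chi G ≤ Fintype.card V :=
  chi_le_of_colorable G.colorable_of_fintype

lemma cliqueNum_le_chi [Finite V] (G : SimpleGraph V) : G.cliqueNum ≤ chi G := by
  obtain ⟨s, hs⟩ := G.exists_isNClique_cliqueNum
  exact hs.card_eq ▸ hs.isClique.card_le_of_colorable (colorable_chi G)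

lemma chi_le_of_hom [Finite W] (f : G →g H) : chi G ≤ chi H :=
  chi_le_of_colorable ((colorable_chi H).of_hom f)

lemma chi_congr [Finite V] [Finite W] (e : G ≃g H) : chi G = chi H :=
  (chi_le_of_hom e.toHom).antisymm (chi_le_of_hom e.symm.toHom)

lemma fDiff_eq_sub [Finite V] (G : SimpleGraph V) : (fDiff G : ℤ) = chi G - G.cliqueNum := by
  have := cliqueNum_le_chi G
  unfold fDiff
  omega

lemma cliqueNum_eq_card_of_chi_eq_card [Fintype V] (h : chi G = Fintype.card V) :
    G.cliqueNum = Fintype.card V := by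
  have hchrom : G.chromaticNumber = Fintype.card V := by
    rw [← h, chi,
      ENat.natCast_toNat (chromaticNumber_ne_top_iff_exists.2 ⟨_, G.colorable_of_fintype⟩)]
  have htop := G.eq_top_of_chromaticNumber_eq_card hchrom
  have huniv : G.IsClique ((univ : Finset V) : Set V) := by
    rw [coe_univ, isClique_univ]; exact htop
  exact le_antisymm (h ▸ cliqueNum_le_chi G) (by simpa using huniv.card_le_cliqueNum)

end ChromaticNumber

namespace SimpleGraph

variable {V W : Type*} {G : SimpleGraph V} {H : SimpleGraph W}

lemma Embedding.cliqueNum_le [Finite W] (e : G ↪g H) : G.cliqueNum ≤ H.cliqueNum := by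
  obtain ⟨s, hs⟩ := G.exists_isNClique_cliqueNum
  have hle : G.map e.toEmbedding ≤ H :=
    (map_le_iff_le_comap _ _ _).2 fun _ _ h ↦ e.map_adj_iff.2 h
  have hs' := (hs.map (f := e.toEmbedding)).mono hle
  exact hs'.card_eq ▸ hs'.isClique.card_le_cliqueNum

lemma Iso.cliqueNum_eq [Finite V] [Finite W] (e : G ≃g H) : G.cliqueNum = H.cliqueNum :=
  e.toEmbedding.cliqueNum_le.antisymm e.symm.toEmbedding.cliqueNum_le

lemma card_le_cliqueNum_induce [Finite V] {s : Set V} {K : Finset V}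
    (hK : G.IsClique (K : Set V)) (hKs : (K : Set V) ⊆ s) : #K ≤ (G.induce s).cliqueNum := by
  classical
  have hmap : (K.subtype (· ∈ s)).map (Function.Embedding.subtype _) = K :=
    subtype_map_of_mem fun _ ha ↦ hKs ha
  have hclique : (G.induce s).IsNClique #K (K.subtype (· ∈ s)) := by
    rw [isNClique_induce_iff, hmap]
    exact ⟨hK, rfl⟩
  exact hclique.card_eq ▸ hclique.isClique.card_le_cliqueNum

variable {C : Set V}

lemma cliqueNum_le_cliqueNum_induce_compl_add_one [Finite V] (hC : G.IsIndepSet C) :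
    G.cliqueNum ≤ (G.induce Cᶜ).cliqueNum + 1 := by
  classical
  obtain ⟨K, hK⟩ := G.exists_isNClique_cliqueNum
  have hKC : #(K.filter (· ∈ C)) ≤ 1 := card_le_one.2 fun a ha b hb ↦ by
    rw [mem_filter] at ha hb
    by_contra hab
    exact hC ha.2 hb.2 hab (hK.isClique ha.1 hb.1 hab)
  have hKCc : #(K.filter (· ∉ C)) ≤ (G.induce Cᶜ).cliqueNum :=
    card_le_cliqueNum_induce (hK.isClique.subset (coe_subset.2 (filter_subset _ _)))
      fun _ ha ↦ (mem_filter.1 ha).2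
  have := K.card_filter_add_card_filter_not (· ∈ C)
  rw [hK.card_eq] at this
  omega

noncomputable def Coloring.extendOfIsIndepSet {α : Type*} (hC : G.IsIndepSet C)
    (col : (G.induce Cᶜ).Coloring α) : G.Coloring (Option α) := by
  classical
  refine Coloring.mk (fun v ↦ if h : v ∈ C then none else some (col ⟨v, h⟩))
    fun {a b} hab ↦ ?_
  by_cases ha : a ∈ C <;> by_cases hb : b ∈ C
  · exact absurd hab (hC ha hb (G.ne_of_adj hab))
  · simp [ha, hb]
  · simp [ha, hb]
  · simpa [ha, hb] using col.valid (show (G.induce Cᶜ).Adj ⟨a, ha⟩ ⟨b, hb⟩ from hab)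

lemma Coloring.extendOfIsIndepSet_apply_of_notMem {α : Type*} (hC : G.IsIndepSet C)
    (col : (G.induce Cᶜ).Coloring α) {v : V} (hv : v ∉ C) :
    Coloring.extendOfIsIndepSet hC col v = some (col ⟨v, hv⟩) :=
  dif_neg hv

lemma chi_le_chi_induce_compl_add_one [Finite V] (hC : G.IsIndepSet C) :
    chi G ≤ chi (G.induce Cᶜ) + 1 := by
  have := Fintype.ofFinite V
  obtain ⟨col⟩ := colorable_chi (G.induce Cᶜ)
  simpa using chi_le_of_colorable (Coloring.extendOfIsIndepSet hC col).colorable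

lemma Coloring.colorable_induce_compl_colorClass {α : Type*} [Fintype α] (col : G.Coloring α)
    (a : α) : (G.induce (col.colorClass a)ᶜ).Colorable (Fintype.card α - 1) := by
  classical
  have hcol : (G.induce (col.colorClass a)ᶜ).Coloring {b : α | b ≠ a} :=
    Coloring.mk (fun v ↦ ⟨col v, v.2⟩) fun hab h ↦ col.valid hab (congrArg Subtype.val h)
  exact Set.card_ne_eq a ▸ hcol.colorable

end SimpleGraph

section MinimalGraphs

variable {V W : Type*} [Fintype V] [Fintype W] {G : SimpleGraph V} {H : SimpleGraph W}
  {x y : ℤ} {α : Type*} [Fintype α] [DecidableEq α]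

lemma inM_congr (e : G ≃g H) (h : inM x y G) : inM x y H := by
  have hfDiff : fDiff G = fDiff H := by rw [fDiff, fDiff, chi_congr e, e.cliqueNum_eq]
  rw [inM, ← hfDiff, ← chi_congr e, ← Fintype.card_congr e.toEquiv]
  exact h

lemma card_le_card_of_inM_induce (hmin : ∀ n ∈ McardSet x y, Fintype.card V ≤ n)
    {s : Set V} [Fintype s] (h : inM x y (G.induce s)) : Fintype.card V ≤ Fintype.card s :=
  hmin _ ⟨_, inM_congr ((G.induce s).overFinIso rfl) h⟩

lemma inM_induce_compl_colorClass (hy : (fDiff G : ℤ) ≤ y) (col : G.Coloring α)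
    (hα : Fintype.card α = chi G) (a : α)
    (hcard : (Fintype.card V : ℤ) + 3 <
      3 * chi G - 2 * G.cliqueNum - x + Fintype.card (col.colorClass a)) :
    inM x y (G.induce (col.colorClass a)ᶜ) := by
  have hind := col.isIndepSet_colorClass a
  have hchi_le := chi_le_of_colorable (col.colorable_induce_compl_colorClass a)
  have hchi_ge := chi_le_chi_induce_compl_add_one hind
  have hclique_ge := cliqueNum_le_cliqueNum_induce_compl_add_one hind
  have hclique_le := cliqueNum_induce_le (G := G) (col.colorClass a)ᶜ
  have hcompl := Fintype.card_compl_set (col.colorClass a)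
  have := cliqueNum_le_chi G
  have := cliqueNum_le_chi (G.induce (col.colorClass a)ᶜ)
  have := set_fintype_card_le_univ (col.colorClass a)
  rw [inM, fDiff_eq_sub]
  rw [fDiff_eq_sub] at hy
  constructor <;> omega

lemma card_colorClass_le_of_minimal (hy : (fDiff G : ℤ) ≤ y)
    (hmin : ∀ n ∈ McardSet x y, Fintype.card V ≤ n) (col : G.Coloring α)
    (hα : Fintype.card α = chi G) {a : α} (ha : 0 < Fintype.card (col.colorClass a)) :
    3 * chi G - 2 * G.cliqueNum - x + Fintype.card (col.colorClass a) ≤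
      (Fintype.card V : ℤ) + 3 := by
  by_contra! hcard
  have := card_le_card_of_inM_induce hmin (inM_induce_compl_colorClass hy col hα a hcard)
  have := Fintype.card_compl_set (col.colorClass a)
  have := set_fintype_card_le_univ (col.colorClass a)
  omega

lemma chi_induce_compl_singleton_lt_of_minimal (hG : inM x y G)
    (hmin : ∀ n ∈ McardSet x y, Fintype.card V ≤ n) {v : V}
    (hv : G.cliqueNum ≤ (G.induce {v}ᶜ).cliqueNum) : chi (G.induce {v}ᶜ) < chi G := by
  classical
  by_contra! hchi
  have hcard : Fintype.card ({v}ᶜ : Set V) = Fintype.card V - 1 := by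
    simp [filter_ne']
  have := chi_le_of_hom (Embedding.induce (G := G) {v}ᶜ).toHom
  have := cliqueNum_induce_le (G := G) {v}ᶜ
  have := Fintype.card_pos_iff.2 ⟨v⟩
  obtain ⟨hsmall, hy⟩ := hG
  rw [fDiff_eq_sub] at hsmall hy
  have := card_le_card_of_inM_induce hmin (G := G) (s := {v}ᶜ) ⟨?_, ?_⟩
  · omega
  · rw [fDiff_eq_sub]; omega
  · rw [fDiff_eq_sub]; omega

lemma card_le_two_mul_chi_sub_one (hx : 0 ≤ x) (hG : inM x y G)
    (hmin : ∀ n ∈ McardSet x y, Fintype.card V ≤ n) :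
    (Fintype.card V : ℤ) ≤ 2 * chi G - 1 := by
  classical
  by_contra! hlarge
  have hsmall := hG.1
  rw [fDiff_eq_sub] at hsmall
  have hchi_card := chi_le_card G
  have hclique_chi := cliqueNum_le_chi G
  obtain ⟨K, hK⟩ := G.exists_isNClique_cliqueNum
  obtain ⟨v, hv⟩ : ∃ v, v ∉ K := by
    by_contra! h
    have := card_le_card (s := univ) fun v _ ↦ h v
    rw [card_univ, hK.card_eq] at this
    omega
  have hchi := chi_induce_compl_singleton_lt_of_minimal hG hmin
    (hK.card_eq ▸ card_le_cliqueNum_induce hK.isClique (by simpa using hv))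
  obtain ⟨col⟩ := (colorable_chi (G.induce {v}ᶜ)).mono (Nat.le_sub_one_of_lt hchi)
  set ext := Coloring.extendOfIsIndepSet (Set.pairwise_singleton v _) col
  -- the `n - 1 > 2 (χ - 1)` vertices other than `v` avoid the colour `none` of `v`
  obtain ⟨a, -, hfiber⟩ := exists_lt_card_fiber_of_mul_lt_card_of_maps_to
    (s := univ.erase v) (t := univ.map .some) (f := ext) (n := 2)
    (fun u hu ↦ by
      rw [Coloring.extendOfIsIndepSet_apply_of_notMem _ _ (by simpa using ne_of_mem_erase hu)]
      simp)
    (by simp only [card_map, card_univ, Fintype.card_fin, card_erase_of_mem (mem_univ v)]; omega)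
  have hclass : 2 < Fintype.card (ext.colorClass a) := by
    rw [← Set.toFinset_card]
    exact hfiber.trans_le (card_le_card fun u hu ↦ Set.mem_toFinset.2 (mem_filter.1 hu).2)
  have := card_colorClass_le_of_minimal hG.2 hmin ext
    (by simp only [Fintype.card_option, Fintype.card_fin]; omega) (a := a) (by omega)
  omega

lemma four_mul_fDiff_sub_le_card (hx : 0 ≤ x) (hG : inM x y G)
    (hmin : ∀ n ∈ McardSet x y, Fintype.card V ≤ n) :
    4 * (fDiff G : ℤ) - 2 * x - 1 ≤ Fintype.card V := by
  classical
  have hA := card_le_two_mul_chi_sub_one hx hG hmin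
  obtain ⟨hsmall, hy⟩ := hG
  rw [fDiff_eq_sub] at hsmall ⊢
  have hchi_card := chi_le_card G
  have hclique_chi := cliqueNum_le_chi G
  by_contra! hB
  rcases hchi_card.eq_or_lt with hcomplete | hlt
  · have := cliqueNum_eq_card_of_chi_eq_card hcomplete
    omega
  obtain ⟨col⟩ := colorable_chi G
  obtain ⟨a, hfiber⟩ := Fintype.exists_lt_card_fiber_of_mul_lt_card (f := col) (n := 1)
    (by simpa using hlt)
  have hclass : 1 < Fintype.card (col.colorClass a) := by
    rw [← Set.toFinset_card]
    exact hfiber.trans_le (card_le_card fun u hu ↦ Set.mem_toFinset.2 (mem_filter.1 hu).2)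
  have := card_colorClass_le_of_minimal hy hmin col (Fintype.card_fin _) (a := a) (by omega)
  omega

end MinimalGraphs

theorem stmt15 {V : Type*} [Fintype V] (x y : ℤ) (hx : 0 ≤ x)
    (G₀ : SimpleGraph V) (hG₀ : inM x y G₀)
    (hmin : ∀ n ∈ McardSet x y, Fintype.card V ≤ n) :
    (Fintype.card V : ℤ) ≤ 2 * chi G₀ - 1 ∧
      4 * (fDiff G₀ : ℤ) - 2 * x - 1 ≤ (Fintype.card V : ℤ) :=
  ⟨card_le_two_mul_chi_sub_one hx hG₀ hmin, four_mul_fDiff_sub_le_card hx hG₀ hmin⟩
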